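/- Let S be the set of eight points {(1:0:0), (1:1:1), (1:1:-1), (4:1:2), (1:9:3), (9:4:6), (25:1:5), (1:49:-7)} in the complex projective plane P^2(C). If Q is a homogeneous polynomial of degree 2 in C[x0,x1,x2] vanishing at all eight points of S, then Q is a scalar multiple of x0*x1 - x2^2. In particular, the conic {x0*x1 - x2^2 = 0} is the unique conic passing through all eight points of S. -/
import Mathlib


open MvPolynomial

/-- Representative coordinate vectors of the eight points `(1:0:0), (1:1:1),
(1:1:-1), (4:1:2), (1:9:3), (9:4:6), (25:1:5), (1:49:-7)` of `ℙ²(ℂ)`. -/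
def eightPts2 : Fin 8 → Fin 3 → ℂ :=
  ![![1, 0, 0], ![1, 1, 1], ![1, 1, -1], ![4, 1, 2], ![1, 9, 3], ![9, 4, 6],
    ![25, 1, 5], ![1, 49, -7]]

lemma deg2_cases' (d : Fin 3 →₀ ℕ) (h : d 0 + d 1 + d 2 = 2) :
    d = Finsupp.single 0 2 ∨ d = Finsupp.single 1 2 ∨ d = Finsupp.single 2 2 ∨
    d = Finsupp.single 0 1 + Finsupp.single 1 1 ∨
    d = Finsupp.single 0 1 + Finsupp.single 2 1 ∨
    d = Finsupp.single 1 1 + Finsupp.single 2 1 := by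
  have hd : d = Finsupp.single 0 (d 0) + Finsupp.single 1 (d 1) + Finsupp.single 2 (d 2) := by
    ext i; fin_cases i <;> simp [Finsupp.single_apply]
  have hc : (d 0 = 2 ∧ d 1 = 0 ∧ d 2 = 0) ∨ (d 0 = 0 ∧ d 1 = 2 ∧ d 2 = 0) ∨
      (d 0 = 0 ∧ d 1 = 0 ∧ d 2 = 2) ∨ (d 0 = 1 ∧ d 1 = 1 ∧ d 2 = 0) ∨
      (d 0 = 1 ∧ d 1 = 0 ∧ d 2 = 1) ∨ (d 0 = 0 ∧ d 1 = 1 ∧ d 2 = 1) := by omega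
  rcases hc with ⟨h0,h1,h2⟩|⟨h0,h1,h2⟩|⟨h0,h1,h2⟩|⟨h0,h1,h2⟩|⟨h0,h1,h2⟩|⟨h0,h1,h2⟩ <;>
    rw [h0, h1, h2] at hd <;> simp only [Finsupp.single_zero, add_zero, zero_add] at hd <;>
    tauto

lemma deg_eq' (d : Fin 3 →₀ ℕ) : d.degree = d 0 + d 1 + d 2 := by
  rw [Finsupp.degree_eq_weight_one]
  simp [Finsupp.weight_apply, Finsupp.sum_fintype, Fin.sum_univ_three]

/-- Any homogeneous quadratic polynomial in `ℂ[x0,x1,x2]` vanishing at the eight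
points `(1:0:0), (1:1:1), (1:1:-1), (4:1:2), (1:9:3), (9:4:6), (25:1:5), (1:49:-7)`
of `ℙ²(ℂ)` is a scalar multiple of `x0x1 - x2²`; in particular the conic
`{x0x1 - x2² = 0}` is the unique conic through these eight points. -/
theorem unique_conic_through_eight_points
    (Q : MvPolynomial (Fin 3) ℂ) (hQ : Q.IsHomogeneous 2)
    (hvan : ∀ i : Fin 8, MvPolynomial.eval (eightPts2 i) Q = 0) :
    ∃ c : ℂ, Q = MvPolynomial.C c * (X 0 * X 1 - (X 2)^2) := by
  classical
  set A := coeff (Finsupp.single 0 2) Q with hA'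
  set B := coeff (Finsupp.single 1 2) Q with hB'
  set Cc := coeff (Finsupp.single 2 2) Q with hC'
  set D := coeff (Finsupp.single 0 1 + Finsupp.single 1 1) Q with hD'
  set E := coeff (Finsupp.single 0 1 + Finsupp.single 2 1) Q with hE'
  set F := coeff (Finsupp.single 1 1 + Finsupp.single 2 1) Q with hF'
  have hrep : Q = monomial (Finsupp.single 0 2) A + monomial (Finsupp.single 1 2) B +
      monomial (Finsupp.single 2 2) Cc +
      monomial (Finsupp.single 0 1 + Finsupp.single 1 1) D +
      monomial (Finsupp.single 0 1 + Finsupp.single 2 1) E +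
      monomial (Finsupp.single 1 1 + Finsupp.single 2 1) F := by
    ext d
    simp only [coeff_add, coeff_monomial]
    by_cases hdeg : d.degree = 2
    · rw [deg_eq'] at hdeg
      rcases deg2_cases' d hdeg with h|h|h|h|h|h <;> subst h <;>
        simp [hA', hB', hC', hD', hE', hF', Finsupp.ext_iff, Fin.forall_fin_succ,
          Finsupp.single_apply]
    · rw [hQ.coeff_eq_zero hdeg]
      have hne : ∀ m : Fin 3 →₀ ℕ, m.degree = 2 → ¬ (m = d) := by
        rintro m hm rfl; exact hdeg hm
      rw [if_neg, if_neg, if_neg, if_neg, if_neg, if_neg]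
      · ring
      all_goals exact hne _ (by rw [deg_eq']; simp [Finsupp.single_apply])
  have hev : ∀ i : Fin 8, eightPts2 i 0 ^ 2 * A + eightPts2 i 1 ^ 2 * B +
      eightPts2 i 2 ^ 2 * Cc + eightPts2 i 0 * (eightPts2 i 1 * D) +
      eightPts2 i 0 * (eightPts2 i 2 * E) + eightPts2 i 1 * (eightPts2 i 2 * F) = 0 := by
    intro i
    have h := hvan i
    rw [hrep] at h
    simp [eval_monomial, Finsupp.prod_pow, Fin.prod_univ_three,
      Finsupp.single_apply, Finsupp.add_apply] at h
    linear_combination h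
  have e1 := hev 0
  have e2 := hev 1
  have e3 := hev 2
  have e4 := hev 3
  have e5 := hev 4
  simp only [eightPts2, Matrix.cons_val_zero, Matrix.cons_val_one, Matrix.head_cons,
    Matrix.cons_val_two, Matrix.tail_cons, Matrix.cons_val_three,
    Matrix.cons_val_four] at e1 e2 e3 e4 e5
  norm_num at e1 e2 e3 e4 e5
  have hA : A = 0 := by linear_combination e1
  have hB : B = 0 := by
    linear_combination (-(2:ℂ)/3) * e1 - (1/2) * e2 + (1/12) * e3 + (1/15) * e4 + (1/60) * e5
  have hE : E = 0 := by
    linear_combination (-(7:ℂ)/3) * e1 - (3/4) * e2 - (1/8) * e3 + (1/5) * e4 + (1/120) * e5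
  have hF : F = 0 := by
    linear_combination ((7:ℂ)/3) * e1 + (5/4) * e2 - (3/8) * e3 - (1/5) * e4 - (1/120) * e5
  have hC : Cc = -D := by
    linear_combination (-(1:ℂ)/3) * e1 + e2 + (5/12) * e3 - (1/15) * e4 - (1/60) * e5
  refine ⟨D, ?_⟩
  rw [hrep, hA, hB, hE, hF, hC]
  have hX : (C D : MvPolynomial (Fin 3) ℂ) * (X 0 * X 1 - (X 2)^2)
      = monomial (Finsupp.single 0 1 + Finsupp.single 1 1) D +
        monomial (Finsupp.single 2 2) (-D) := by
    have h1 : (X 0 * X 1 : MvPolynomial (Fin 3) ℂ) =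
        monomial (Finsupp.single 0 1 + Finsupp.single 1 1) 1 := by
      rw [X, X, monomial_mul, one_mul]
    have h2 : ((X 2)^2 : MvPolynomial (Fin 3) ℂ) = monomial (Finsupp.single 2 2) 1 := by
      rw [X, monomial_pow, one_pow, Finsupp.smul_single]; norm_num
    rw [h1, h2, mul_sub, C_mul_monomial, C_mul_monomial, mul_one, sub_eq_add_neg, ← map_neg]
  rw [hX]
  simp only [monomial_zero, add_zero, zero_add]
  abel
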